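/- arXiv:2511.20451 — 2 statements merged into one kernel-verified Lean document; each statement's English description precedes it below -/
import Mathlib

section
/- For every ỹ ∈ ℝ³ and every y₄ > 0, ∫_{ℝ³} (1/π²) · y₄/(|ỹ − z̃|² + y₄²)² · 2/(1 + |z̃|²) dz̃ = 2/(|ỹ|² + (1 + y₄)²). In other words, the convolution of the boundary trace Ũ(z̃) = 2/(1 + |z̃|²) with the half-space Poisson kernel P_{y₄}(w̃) = (1/π²)·y₄/(|w̃|² + y₄²)² equals the half-space bubble U(ỹ, y₄). -/
noncomputable section
open Real MeasureTheory Filter Topology RealInnerProductSpace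

/-- `ℝ³`. -/
abbrev E3 : Type := EuclideanSpace ℝ (Fin 3)

lemma feynman_param (B C : ℝ) (hB : 0 < B) (hC : 0 < C) :
    ∫ x in (0:ℝ)..1, 2 * x / (x * B + (1 - x) * C) ^ 3 = 1 / (B ^ 2 * C) := by
  have key : ∀ x ∈ Set.uIcc (0:ℝ) 1,
      HasDerivAt (fun x : ℝ => x ^ 2 / (C * (x * B + (1 - x) * C) ^ 2))
        (2 * x / (x * B + (1 - x) * C) ^ 3) x := by
    intro x hx
    rw [Set.uIcc_of_le (by norm_num)] at hx
    obtain ⟨hx0, hx1⟩ := hx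
    have hden : 0 < x * B + (1 - x) * C := by
      rcases lt_or_ge x 1 with h | h
      · have : 0 ≤ x * B := mul_nonneg hx0 hB.le
        nlinarith
      · have : x = 1 := le_antisymm hx1 h
        subst this; simpa using hB
    have h1 : HasDerivAt (fun x : ℝ => x * B + (1 - x) * C) (B - C) x := by
      have := ((hasDerivAt_id x).mul_const B).add
        (((hasDerivAt_const x (1:ℝ)).sub (hasDerivAt_id x)).mul_const C)
      exact this.congr_deriv (by ring)
    have h2 : HasDerivAt (fun x : ℝ => C * (x * B + (1 - x) * C) ^ 2)
        (C * (2 * (x * B + (1 - x) * C) * (B - C))) x :=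
      ((h1.pow 2).const_mul C).congr_deriv (by ring)
    have h3 : HasDerivAt (fun x : ℝ => x ^ 2 / (C * (x * B + (1 - x) * C) ^ 2))
        ((2 * x * (C * (x * B + (1 - x) * C) ^ 2) -
          x ^ 2 * (C * (2 * (x * B + (1 - x) * C) * (B - C)))) /
          (C * (x * B + (1 - x) * C) ^ 2) ^ 2) x := by
      exact ((hasDerivAt_pow 2 x).div h2 (by positivity)).congr_deriv (by ring)
    convert h3 using 1
    field_simp
    ring
  have hcont : IntervalIntegrable (fun x : ℝ => 2 * x / (x * B + (1 - x) * C) ^ 3)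
      volume 0 1 := by
    apply ContinuousOn.intervalIntegrable
    apply ContinuousOn.div (by fun_prop)
    · fun_prop
    · intro x hx
      rw [Set.uIcc_of_le (by norm_num)] at hx
      obtain ⟨hx0, hx1⟩ := hx
      have hden : 0 < x * B + (1 - x) * C := by
        rcases lt_or_ge x 1 with h | h
        · have : 0 ≤ x * B := mul_nonneg hx0 hB.le
          nlinarith
        · have : x = 1 := le_antisymm hx1 h
          subst this; simpa using hB
      positivity
  rw [intervalIntegral.integral_eq_sub_of_hasDerivAt key hcont]
  field_simp
  ring

lemma radial_integral (c : ℝ) (hc : 0 < c) :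
    ∫ r in Set.Ioi (0:ℝ), r ^ 2 / (r ^ 2 + c ^ 2) ^ 3 = π / (16 * c ^ 3) := by
  set g : ℝ → ℝ := fun r =>
    -r / (4 * (r ^ 2 + c ^ 2) ^ 2) + r / (8 * c ^ 2 * (r ^ 2 + c ^ 2)) + arctan (r / c) / (8 * c ^ 3)
    with hg
  have hderiv : ∀ r ∈ Set.Ici (0:ℝ), HasDerivAt g (r ^ 2 / (r ^ 2 + c ^ 2) ^ 3) r := by
    intro r _
    have hden : (0:ℝ) < r ^ 2 + c ^ 2 := by positivity
    have h1 : HasDerivAt (fun r : ℝ => r ^ 2 + c ^ 2) (2 * r) r := by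
      simpa using ((hasDerivAt_pow 2 r).add_const (c ^ 2))
    have h4 : HasDerivAt (fun r : ℝ => 4 * (r ^ 2 + c ^ 2) ^ 2)
        (16 * r * (r ^ 2 + c ^ 2)) r := by
      have := (h1.pow 2).const_mul (4:ℝ)
      refine this.congr_deriv (Eq.symm ?_)
      ring
    have h8 : HasDerivAt (fun r : ℝ => 8 * c ^ 2 * (r ^ 2 + c ^ 2))
        (8 * c ^ 2 * (2 * r)) r := h1.const_mul _
    have hA : HasDerivAt (fun r : ℝ => -r / (4 * (r ^ 2 + c ^ 2) ^ 2))
        (((-1) * (4 * (r ^ 2 + c ^ 2) ^ 2) - (-r) * (16 * r * (r ^ 2 + c ^ 2))) /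
          (4 * (r ^ 2 + c ^ 2) ^ 2) ^ 2) r := by
      have hid : HasDerivAt (fun r : ℝ => -r) (-1) r := (hasDerivAt_id r).neg
      exact hid.div h4 (by positivity)
    have hB : HasDerivAt (fun r : ℝ => r / (8 * c ^ 2 * (r ^ 2 + c ^ 2)))
        ((1 * (8 * c ^ 2 * (r ^ 2 + c ^ 2)) - r * (8 * c ^ 2 * (2 * r))) /
          (8 * c ^ 2 * (r ^ 2 + c ^ 2)) ^ 2) r := (hasDerivAt_id r).div h8 (by positivity)
    have hC : HasDerivAt (fun r : ℝ => arctan (r / c) / (8 * c ^ 3))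
        ((1 / (1 + (r / c) ^ 2) * (1 / c)) / (8 * c ^ 3)) r := by
      have hq : HasDerivAt (fun r : ℝ => r / c) (1 / c) r := by
        simpa using (hasDerivAt_id r).div_const c
      exact ((Real.hasDerivAt_arctan (r / c)).comp r hq).div_const _
    have := (hA.add hB).add hC
    refine this.congr_deriv (Eq.symm ?_)
    have hc' : c ≠ 0 := hc.ne'
    field_simp
    ring
  have htend : Tendsto g atTop (𝓝 (π / (16 * c ^ 3))) := by
    have l1 : Tendsto (fun r : ℝ => -r / (4 * (r ^ 2 + c ^ 2) ^ 2)) atTop (𝓝 0) := by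
      have : (fun r : ℝ => -r / (4 * (r ^ 2 + c ^ 2) ^ 2)) =ᶠ[atTop]
          (fun r : ℝ => -(1 / r ^ 3) / (4 * (1 + c ^ 2 / r ^ 2) ^ 2)) := by
        filter_upwards [eventually_gt_atTop (0:ℝ)] with r hr
        field_simp
      rw [tendsto_congr' this]
      have h2 : Tendsto (fun r : ℝ => 1 / r ^ 3) atTop (𝓝 0) :=
        tendsto_const_nhds.div_atTop (tendsto_pow_atTop (by norm_num))
      have h3 : Tendsto (fun r : ℝ => c ^ 2 / r ^ 2) atTop (𝓝 0) :=
        tendsto_const_nhds.div_atTop (tendsto_pow_atTop (by norm_num))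
      have := (h2.neg.div ((((h3.const_add 1)).pow 2).const_mul 4) (by norm_num))
      simpa [Pi.div_def] using this
    have l2 : Tendsto (fun r : ℝ => r / (8 * c ^ 2 * (r ^ 2 + c ^ 2))) atTop (𝓝 0) := by
      have : (fun r : ℝ => r / (8 * c ^ 2 * (r ^ 2 + c ^ 2))) =ᶠ[atTop]
          (fun r : ℝ => (1 / r) / (8 * c ^ 2 * (1 + c ^ 2 / r ^ 2))) := by
        filter_upwards [eventually_gt_atTop (0:ℝ)] with r hr
        field_simp
      rw [tendsto_congr' this]
      have h2 : Tendsto (fun r : ℝ => 1 / r) atTop (𝓝 0) :=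
        tendsto_const_nhds.div_atTop tendsto_id
      have h3 : Tendsto (fun r : ℝ => c ^ 2 / r ^ 2) atTop (𝓝 0) :=
        tendsto_const_nhds.div_atTop (tendsto_pow_atTop (by norm_num))
      have := h2.div ((h3.const_add 1).const_mul (8 * c ^ 2)) (by positivity)
      simpa [Pi.div_def] using this
    have l3 : Tendsto (fun r : ℝ => arctan (r / c) / (8 * c ^ 3)) atTop
        (𝓝 ((π / 2) / (8 * c ^ 3))) := by
      have : Tendsto (fun r : ℝ => r / c) atTop atTop :=
        tendsto_id.atTop_div_const hc
      exact ((Real.tendsto_arctan_atTop.mono_right nhdsWithin_le_nhds).comp this).div_const _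
    have := (l1.add l2).add l3
    convert this using 2
    ring
  have hpos : ∀ r ∈ Set.Ioi (0:ℝ), 0 ≤ r ^ 2 / (r ^ 2 + c ^ 2) ^ 3 := by
    intro r _; positivity
  have := integral_Ioi_of_hasDerivAt_of_nonneg' hderiv hpos htend
  rw [this]
  simp [hg]


lemma integrable_aux (c : ℝ) (hc : 0 < c) :
    Integrable (fun z : E3 => 1 / (‖z‖ ^ 2 + c ^ 2) ^ 3) := by
  have h6 : Integrable (fun z : E3 => (1 + ‖z‖) ^ (-(6:ℝ))) := by
    apply integrable_one_add_norm (E := E3)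
    simp [finrank_euclideanSpace]
    norm_num
  set m : ℝ := min 1 (c ^ 2) with hm
  have hm0 : 0 < m := lt_min one_pos (by positivity)
  refine (h6.const_mul (8 / m ^ 3)).mono' ?_ ?_
  · apply Continuous.aestronglyMeasurable
    have : ∀ z : E3, (‖z‖ ^ 2 + c ^ 2) ^ 3 ≠ 0 := fun z => by positivity
    fun_prop (disch := intro z; positivity)
  · filter_upwards with z
    have h1 : (0:ℝ) ≤ ‖z‖ := norm_nonneg z
    have key : m ^ 3 * (1 + ‖z‖) ^ 6 ≤ 8 * (‖z‖ ^ 2 + c ^ 2) ^ 3 := by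
      have h2 : (1 + ‖z‖) ^ 2 ≤ 2 * (1 + ‖z‖ ^ 2) := by nlinarith [sq_nonneg (‖z‖ - 1)]
      have h3 : m * (1 + ‖z‖ ^ 2) ≤ ‖z‖ ^ 2 + c ^ 2 := by
        have := min_le_left 1 (c ^ 2)
        have := min_le_right 1 (c ^ 2)
        nlinarith
      calc m ^ 3 * (1 + ‖z‖) ^ 6 = ((1 + ‖z‖) ^ 2) ^ 3 * m ^ 3 := by ring
        _ ≤ (2 * (1 + ‖z‖ ^ 2)) ^ 3 * m ^ 3 := by
            apply mul_le_mul_of_nonneg_right _ (by positivity)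
            exact pow_le_pow_left₀ (by positivity) h2 3
        _ = 8 * (m * (1 + ‖z‖ ^ 2)) ^ 3 := by ring
        _ ≤ 8 * (‖z‖ ^ 2 + c ^ 2) ^ 3 := by
            apply mul_le_mul_of_nonneg_left _ (by norm_num)
            exact pow_le_pow_left₀ (by positivity) h3 3
    rw [Real.norm_eq_abs, abs_of_nonneg (by positivity),
      Real.rpow_neg (by positivity),
      show ((6:ℝ)) = ((6:ℕ):ℝ) by norm_num, Real.rpow_natCast, one_div]
    calc ((‖z‖ ^ 2 + c ^ 2) ^ 3)⁻¹ ≤ (m ^ 3 * (1 + ‖z‖) ^ 6 / 8)⁻¹ := by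
          apply inv_anti₀ (by positivity)
          linarith
      _ = 8 / m ^ 3 * ((1 + ‖z‖) ^ 6)⁻¹ := by
          field_simp

lemma integral_E3 (c : ℝ) (hc : 0 < c) :
    ∫ z : E3, 1 / (‖z‖ ^ 2 + c ^ 2) ^ 3 = π ^ 2 / (4 * c ^ 3) := by
  have h := MeasureTheory.integral_fun_norm_addHaar (volume : Measure E3)
    (fun r : ℝ => 1 / (r ^ 2 + c ^ 2) ^ 3)
  have hdim : Module.finrank ℝ E3 = 3 := by simp [finrank_euclideanSpace]
  rw [hdim] at h
  have hball : (volume (Metric.ball (0:E3) 1)).toReal = 4 * π / 3 := by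
    rw [EuclideanSpace.volume_ball]
    have hcard : (Fintype.card (Fin 3) : ℝ) = 3 := by simp
    have hG : Real.Gamma ((Fintype.card (Fin 3) : ℝ) / 2 + 1) = 3 / 4 * Real.sqrt π := by
      rw [hcard]
      have e1 : (3:ℝ) / 2 + 1 = (1/2 + 1) + 1 := by norm_num
      rw [e1, Real.Gamma_add_one (by norm_num), Real.Gamma_add_one (by norm_num),
        Real.Gamma_one_half_eq]
      ring
    rw [hG]
    simp only [Fintype.card_fin]
    rw [ENNReal.ofReal_one, one_pow, one_mul, ENNReal.toReal_ofReal (by positivity)]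
    have hs : Real.sqrt π > 0 := Real.sqrt_pos.2 pi_pos
    rw [show Real.sqrt π ^ 3 = Real.sqrt π ^ 2 * Real.sqrt π by ring, Real.sq_sqrt pi_pos.le]
    field_simp
  rw [h, measureReal_def, hball]
  have : ∫ (y : ℝ) in Set.Ioi 0, y ^ (3 - 1) • (1 / (y ^ 2 + c ^ 2) ^ 3)
      = ∫ r in Set.Ioi (0:ℝ), r ^ 2 / (r ^ 2 + c ^ 2) ^ 3 := by
    apply MeasureTheory.setIntegral_congr_fun measurableSet_Ioi
    intro y _
    simp [smul_eq_mul]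
    ring
  rw [this, radial_integral c hc]
  simp only [nsmul_eq_mul, smul_eq_mul]
  have : c ^ 3 ≠ 0 := by positivity
  field_simp
  ring

lemma final_ftc (a t : ℝ) (ht : 0 < t) (ha : 0 ≤ a) :
    t * ∫ x in (0:ℝ)..1, x / Real.sqrt (x * t ^ 2 + (1 - x) + x * (1 - x) * a ^ 2) ^ 3
      = 2 / (a ^ 2 + (1 + t) ^ 2) := by
  set Δ : ℝ → ℝ := fun x => x * t ^ 2 + (1 - x) + x * (1 - x) * a ^ 2 with hΔ
  have hΔpos : ∀ x ∈ Set.uIcc (0:ℝ) 1, 0 < Δ x := by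
    intro x hx
    rw [Set.uIcc_of_le (by norm_num)] at hx
    obtain ⟨h0, h1⟩ := hx
    have h2 : 0 ≤ x * (1 - x) * a ^ 2 :=
      mul_nonneg (mul_nonneg h0 (by linarith)) (sq_nonneg a)
    rcases lt_or_ge x 1 with h | h
    · have : 0 ≤ x * t ^ 2 := by positivity
      simp only [hΔ]; nlinarith
    · have hx1 : x = 1 := le_antisymm h1 h
      subst hx1; simp only [hΔ]; nlinarith [sq_nonneg t, ht]
  by_cases hD : a = 0 ∧ t = 1
  · obtain ⟨ha0, ht1⟩ := hD
    subst ha0 ht1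
    rw [intervalIntegral.integral_congr (g := fun x : ℝ => x)]
    · rw [integral_id]; norm_num
    · intro x hx
      simp only [hΔ]
      rw [show x * 1 ^ 2 + (1 - x) + x * (1 - x) * 0 ^ 2 = 1 by ring]
      simp
  · set q : ℝ := a ^ 2 + t ^ 2 - 1 with hq
    set D : ℝ := q ^ 2 + 4 * a ^ 2 with hDdef
    have hDpos : 0 < D := by
      rcases eq_or_lt_of_le ha with h | h
      · have ha0 : a = 0 := h.symm
        have ht1 : t ≠ 1 := fun h' => hD ⟨ha0, h'⟩
        have hq0 : q ≠ 0 := by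
          simp only [hq, ha0]
          intro h'
          have h2 : (t - 1) * (t + 1) = 0 := by nlinarith
          rcases mul_eq_zero.mp h2 with h3 | h3
          · exact ht1 (by linarith)
          · linarith
        positivity
      · positivity
    -- antiderivative H x = 2 * (q * x + 2) / (D * sqrt (Δ x))
    have key : ∀ x ∈ Set.uIcc (0:ℝ) 1,
        HasDerivAt (fun x : ℝ => 2 * (q * x + 2) / (D * Real.sqrt (Δ x)))
          (x / Real.sqrt (Δ x) ^ 3) x := by
      intro x hx
      have hpos := hΔpos x hx
      have hs : 0 < Real.sqrt (Δ x) := Real.sqrt_pos.2 hpos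
      have hs2 : Real.sqrt (Δ x) ^ 2 = Δ x := Real.sq_sqrt hpos.le
      have hDer : HasDerivAt Δ (t ^ 2 - 1 + (1 - 2 * x) * a ^ 2) x := by
        have : HasDerivAt (fun x : ℝ => x * t ^ 2 + (1 - x) + x * (1 - x) * a ^ 2)
            (1 * t ^ 2 + (0 - 1) + ((1 * (1 - x) + x * (0 - 1)) * a ^ 2)) x := by
          exact (((hasDerivAt_id x).mul_const (t^2)).add
            ((hasDerivAt_const x 1).sub (hasDerivAt_id x))).add
            (((hasDerivAt_id x).mul ((hasDerivAt_const x 1).sub (hasDerivAt_id x))).mul_const (a^2))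
        simpa using this.congr_deriv (by ring)
      have hsd : HasDerivAt (fun x : ℝ => Real.sqrt (Δ x))
          ((t ^ 2 - 1 + (1 - 2 * x) * a ^ 2) / (2 * Real.sqrt (Δ x))) x := by
        have := (Real.hasDerivAt_sqrt hpos.ne').comp x hDer
        simpa [mul_comm, div_eq_mul_inv, Function.comp_def] using this.congr_deriv (by ring)
      have hden : HasDerivAt (fun x : ℝ => D * Real.sqrt (Δ x))
          (D * ((t ^ 2 - 1 + (1 - 2 * x) * a ^ 2) / (2 * Real.sqrt (Δ x)))) x :=
        hsd.const_mul D
      have hnum : HasDerivAt (fun x : ℝ => 2 * (q * x + 2)) (2 * q) x := by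
        have := (((hasDerivAt_id x).const_mul q).add_const (2:ℝ)).const_mul (2:ℝ)
        simpa using this.congr_deriv (by ring)
      have hdiv := hnum.div hden (by positivity)
      refine hdiv.congr_deriv (Eq.symm ?_)
      have hid : 2 * q * (Δ x) - (q * x + 2) * (t ^ 2 - 1 + (1 - 2 * x) * a ^ 2) = D * x := by
        simp only [hΔ, hq, hDdef]
        ring
      rw [← hs2] at hid
      generalize hgen : Real.sqrt (Δ x) = s at hs hid ⊢
      have e1 : (2 * q * (D * s) - 2 * (q * x + 2) *
            (D * ((t ^ 2 - 1 + (1 - 2 * x) * a ^ 2) / (2 * s))))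
          = D * (2 * q * s ^ 2
              - (q * x + 2) * (t ^ 2 - 1 + (1 - 2 * x) * a ^ 2)) / s := by
        field_simp
      rw [e1, hid, div_div, eq_div_iff (by positivity)]
      rw [div_mul_eq_mul_div, div_eq_iff (by positivity)]
      ring
    have hcont : IntervalIntegrable (fun x : ℝ => x / Real.sqrt (Δ x) ^ 3) volume 0 1 := by
      apply ContinuousOn.intervalIntegrable
      apply ContinuousOn.div continuousOn_id
      · exact ((Real.continuous_sqrt.comp (by fun_prop)).pow 3).continuousOn
      · intro x hx
        have := hΔpos x hx
        positivity
    rw [intervalIntegral.integral_eq_sub_of_hasDerivAt key hcont]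
    have hΔ1 : Δ 1 = t ^ 2 := by simp [hΔ]
    have hΔ0 : Δ 0 = 1 := by simp [hΔ]
    rw [hΔ1, hΔ0, Real.sqrt_one, Real.sqrt_sq ht.le]
    have hfac : D = (a ^ 2 + (1 + t) ^ 2) * (a ^ 2 + (1 - t) ^ 2) := by
      simp only [hDdef, hq]; ring
    have h2 : a ^ 2 + (1 - t) ^ 2 ≠ 0 := by
      intro h'
      have ha0 : a = 0 := by nlinarith [sq_nonneg a, sq_nonneg (1 - t)]
      have ht1 : t = 1 := by nlinarith [sq_nonneg (1 - t)]
      exact hD ⟨ha0, ht1⟩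
    have h3 : a ^ 2 + (1 + t) ^ 2 ≠ 0 := by positivity
    rw [hfac]
    field_simp
    ring

/-- The convolution of the boundary trace `Ũ(z̃) = 2/(1 + |z̃|²)` with the half-space
Poisson kernel `P_{y₄}(w̃) = (1/π²)·y₄/(|w̃|² + y₄²)²` equals the half-space bubble
`U(ỹ, y₄) = 2/(|ỹ|² + (1 + y₄)²)`, for every `ỹ ∈ ℝ³` and `y₄ > 0`. -/
theorem poisson_extension_of_bubble (ytil : E3) (y₄ : ℝ) (hy₄ : 0 < y₄) :
    (∫ z : E3, (1 / π ^ 2) * (y₄ / (‖ytil - z‖ ^ 2 + y₄ ^ 2) ^ 2) * (2 / (1 + ‖z‖ ^ 2)))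
      = 2 / (‖ytil‖ ^ 2 + (1 + y₄) ^ 2) := by
  set t : ℝ := y₄ with htdef
  set a : ℝ := ‖ytil‖ with hadef
  have ha : 0 ≤ a := norm_nonneg _
  set B : E3 → ℝ := fun z => ‖ytil - z‖ ^ 2 + t ^ 2 with hB
  set C : E3 → ℝ := fun z => 1 + ‖z‖ ^ 2 with hC
  have hBpos : ∀ z, 0 < B z := fun z => by simp only [hB]; positivity
  have hCpos : ∀ z, 0 < C z := fun z => by simp only [hC]; positivity
  set F : ℝ → E3 → ℝ := fun x z => 2 * x / (x * B z + (1 - x) * C z) ^ 3 with hF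
  set Δ : ℝ → ℝ := fun x => x * t ^ 2 + (1 - x) + x * (1 - x) * a ^ 2 with hΔ
  have hΔpos : ∀ x ∈ Set.Icc (0:ℝ) 1, 0 < Δ x := by
    intro x hx
    obtain ⟨h0, h1⟩ := hx
    have h2 : 0 ≤ x * (1 - x) * a ^ 2 :=
      mul_nonneg (mul_nonneg h0 (by linarith)) (sq_nonneg a)
    rcases lt_or_ge x 1 with h | h
    · have : 0 ≤ x * t ^ 2 := by positivity
      simp only [hΔ]; nlinarith
    · have hx1 : x = 1 := le_antisymm h1 h
      subst hx1; simp only [hΔ]; nlinarith [sq_nonneg t, hy₄]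
  -- completing the square
  have hsq : ∀ (x : ℝ) (z : E3), x * B z + (1 - x) * C z = ‖z - x • ytil‖ ^ 2 + Δ x := by
    intro x z
    have h1 : ‖ytil - z‖ ^ 2 = ‖ytil‖ ^ 2 - 2 * ⟪ytil, z⟫ + ‖z‖ ^ 2 :=
      @norm_sub_sq_real E3 _ _ ytil z
    have h2 : ‖z - x • ytil‖ ^ 2 = ‖z‖ ^ 2 - 2 * ⟪z, x • ytil⟫ + ‖x • ytil‖ ^ 2 :=
      @norm_sub_sq_real E3 _ _ z (x • ytil)
    have h3 : ⟪z, x • ytil⟫ = x * ⟪ytil, z⟫ := by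
      rw [real_inner_smul_right, real_inner_comm]
    have h4 : ‖x • ytil‖ ^ 2 = x ^ 2 * a ^ 2 := by
      rw [norm_smul]
      simp [hadef, mul_pow, sq_abs]
    simp only [hB, hC, hΔ]
    rw [h1, h2, h3, h4]
    simp only [hadef]
    ring
  -- inner spatial integral
  have hslice : ∀ x : ℝ, 0 < Δ x →
      Integrable (fun z : E3 => F x z) ∧
      ∫ z : E3, F x z = 2 * x * (π ^ 2 / (4 * Real.sqrt (Δ x) ^ 3)) := by
    intro x hx
    set c : ℝ := Real.sqrt (Δ x) with hcdef
    have hc : 0 < c := Real.sqrt_pos.2 hx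
    have hc2 : c ^ 2 = Δ x := Real.sq_sqrt hx.le
    have heq : (fun z : E3 => F x z)
        = fun z : E3 => 2 * x * (1 / ((‖z - x • ytil‖ ^ 2 + c ^ 2) ^ 3)) := by
      funext z
      simp only [hF]
      rw [hsq x z, ← hc2]
      ring
    have hint : Integrable (fun z : E3 => 1 / ((‖z - x • ytil‖ ^ 2 + c ^ 2) ^ 3)) :=
      (integrable_aux c hc).comp_sub_right (x • ytil)
    constructor
    · rw [heq]; exact hint.const_mul _
    · rw [heq, MeasureTheory.integral_const_mul,
        MeasureTheory.integral_sub_right_eq_self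
          (fun w : E3 => 1 / ((‖w‖ ^ 2 + c ^ 2) ^ 3)) (x • ytil),
        integral_E3 c hc]
  -- measurability on the product
  have hcontprod : ContinuousOn (fun p : ℝ × E3 => F p.1 p.2)
      (Set.Ioc (0:ℝ) 1 ×ˢ (Set.univ : Set E3)) := by
    apply ContinuousOn.div
    · fun_prop
    · apply Continuous.continuousOn
      simp only [hF, hB, hC]
      fun_prop
    · rintro ⟨x, z⟩ ⟨hx, -⟩
      have h := hsq x z
      have hd := hΔpos x (Set.mem_Icc_of_Ioc hx)
      have : 0 < x * B z + (1 - x) * C z := by rw [h]; positivity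
      positivity
  have hF_meas : AEStronglyMeasurable (fun p : ℝ × E3 => F p.1 p.2)
      ((volume.restrict (Set.Ioc (0:ℝ) 1)).prod volume) := by
    rw [← MeasureTheory.Measure.restrict_univ (μ := (volume : Measure E3)),
      MeasureTheory.Measure.prod_restrict]
    exact hcontprod.aestronglyMeasurable (measurableSet_Ioc.prod MeasurableSet.univ)
  -- integrability on the product
  set m : ℝ := min 1 (t ^ 2) with hm
  have hm0 : 0 < m := lt_min one_pos (by positivity)
  have hmΔ : ∀ x ∈ Set.Ioc (0:ℝ) 1, m ≤ Δ x := by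
    intro x hx
    obtain ⟨h0, h1⟩ := hx
    have h2 : 0 ≤ x * (1 - x) * a ^ 2 :=
      mul_nonneg (mul_nonneg h0.le (by linarith)) (sq_nonneg a)
    have hl := min_le_left (1:ℝ) (t ^ 2)
    have hr := min_le_right (1:ℝ) (t ^ 2)
    simp only [hΔ]
    nlinarith
  have hprod : Integrable (Function.uncurry F)
      ((volume.restrict (Set.Ioc (0:ℝ) 1)).prod volume) := by
    have huncurry : Function.uncurry F = fun p : ℝ × E3 => F p.1 p.2 := rfl
    rw [huncurry, MeasureTheory.integrable_prod_iff hF_meas]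
    constructor
    · rw [MeasureTheory.ae_restrict_iff' measurableSet_Ioc]
      filter_upwards with x hx
      exact (hslice x (hΔpos x (Set.mem_Icc_of_Ioc hx))).1
    · have hbd : ∀ᵐ x ∂(volume.restrict (Set.Ioc (0:ℝ) 1)),
          ‖∫ z : E3, ‖F x z‖‖ ≤ 2 * (π ^ 2 / (4 * Real.sqrt m ^ 3)) := by
        rw [MeasureTheory.ae_restrict_iff' measurableSet_Ioc]
        filter_upwards with x hx
        have hd := hΔpos x (Set.mem_Icc_of_Ioc hx)
        have hnn : ∀ z : E3, 0 ≤ F x z := by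
          intro z
          have h := hsq x z
          have : 0 < x * B z + (1 - x) * C z := by rw [h]; positivity
          have hx0 : 0 < x := hx.1
          simp only [hF]
          positivity
        have : (∫ z : E3, ‖F x z‖) = ∫ z : E3, F x z := by
          congr 1; funext z; rw [Real.norm_eq_abs, abs_of_nonneg (hnn z)]
        rw [this, (hslice x hd).2]
        have hsm : Real.sqrt m ≤ Real.sqrt (Δ x) := Real.sqrt_le_sqrt (hmΔ x hx)
        have hsm0 : 0 < Real.sqrt m := Real.sqrt_pos.2 hm0
        have hsd0 : 0 < Real.sqrt (Δ x) := Real.sqrt_pos.2 hd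
        rw [Real.norm_eq_abs,
          abs_of_nonneg (mul_nonneg (by linarith [hx.1] : (0:ℝ) ≤ 2 * x) (by positivity))]
        have hpow : Real.sqrt m ^ 3 ≤ Real.sqrt (Δ x) ^ 3 :=
          pow_le_pow_left₀ hsm0.le hsm 3
        have h1 : π ^ 2 / (4 * Real.sqrt (Δ x) ^ 3) ≤ π ^ 2 / (4 * Real.sqrt m ^ 3) := by
          apply div_le_div_of_nonneg_left (by positivity) (by positivity)
          linarith
        have h2 : 2 * x ≤ 2 := by linarith [hx.2]
        have h3 : 0 ≤ π ^ 2 / (4 * Real.sqrt (Δ x) ^ 3) := by positivity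
        calc 2 * x * (π ^ 2 / (4 * Real.sqrt (Δ x) ^ 3))
            ≤ 2 * (π ^ 2 / (4 * Real.sqrt (Δ x) ^ 3)) := by
              apply mul_le_mul_of_nonneg_right h2 h3
          _ ≤ 2 * (π ^ 2 / (4 * Real.sqrt m ^ 3)) := by linarith
      have hrestr : (volume.restrict (Set.Ioc (0:ℝ) 1)) (Set.univ) ≠ ⊤ := by
        rw [MeasureTheory.Measure.restrict_apply_univ]
        simp [Real.volume_Ioc]
      exact MeasureTheory.Integrable.mono' (integrable_const _)
        hF_meas.norm.integral_prod_right' hbd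
  -- now the computation
  have step1 : (∫ z : E3, (1 / π ^ 2) * (y₄ / (‖ytil - z‖ ^ 2 + y₄ ^ 2) ^ 2) * (2 / (1 + ‖z‖ ^ 2)))
      = (2 * t / π ^ 2) * ∫ z : E3, ∫ x in Set.Ioc (0:ℝ) 1, F x z := by
    rw [← MeasureTheory.integral_const_mul]
    congr 1
    funext z
    rw [← intervalIntegral.integral_of_le (by norm_num : (0:ℝ) ≤ 1),
      feynman_param (B z) (C z) (hBpos z) (hCpos z)]
    simp only [hB, hC]
    have h1 : (‖ytil - z‖ ^ 2 + t ^ 2) ≠ 0 := (hBpos z).ne'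
    have h2 : (1 + ‖z‖ ^ 2) ≠ 0 := (hCpos z).ne'
    have h3 : (π:ℝ) ≠ 0 := Real.pi_ne_zero
    rw [← htdef]
    field_simp
  rw [step1, ← MeasureTheory.integral_integral_swap hprod]
  have step2 : (∫ x in Set.Ioc (0:ℝ) 1, ∫ z : E3, F x z)
      = ∫ x in Set.Ioc (0:ℝ) 1, 2 * x * (π ^ 2 / (4 * Real.sqrt (Δ x) ^ 3)) := by
    apply MeasureTheory.setIntegral_congr_fun measurableSet_Ioc
    intro x hx
    exact (hslice x (hΔpos x (Set.mem_Icc_of_Ioc hx))).2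
  rw [step2]
  have step3 : (∫ x in Set.Ioc (0:ℝ) 1, 2 * x * (π ^ 2 / (4 * Real.sqrt (Δ x) ^ 3)))
      = (π ^ 2 / 2) * ∫ x in Set.Ioc (0:ℝ) 1, x / Real.sqrt (Δ x) ^ 3 := by
    rw [← MeasureTheory.integral_const_mul]
    apply MeasureTheory.setIntegral_congr_fun measurableSet_Ioc
    intro x _
    beta_reduce
    ring
  rw [step3]
  have hfin := final_ftc a t hy₄ ha
  rw [← intervalIntegral.integral_of_le (by norm_num : (0:ℝ) ≤ 1)] at *
  have h3 : (π:ℝ) ≠ 0 := Real.pi_ne_zero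
  calc 2 * t / π ^ 2 * (π ^ 2 / 2 * ∫ x in (0:ℝ)..1, x / Real.sqrt (Δ x) ^ 3)
      = t * ∫ x in (0:ℝ)..1, x / Real.sqrt (Δ x) ^ 3 := by
        field_simp
    _ = 2 / (a ^ 2 + (1 + t) ^ 2) := hfin
    _ = 2 / (‖ytil‖ ^ 2 + (1 + y₄) ^ 2) := by rw [hadef, htdef]
end
end

section
/- There exists an absolute constant C > 0 such that for every T ∈ (0, 1/2], every continuously differentiable μ : [−T, T] → (0, ∞), every ρ ≥ 0, and every t ∈ (0, T), setting ζ := (ρ² + μ(t)²)^{1/2}, one has |∫_{−T}^{t} μ'(s) k(ζ, t − s) ds| ≤ C (sup_{[−T,T]} |μ'|) (1 + |log(ρ² + μ(t)²)|). In particular the correction term Ψ₀(x, t) := −2 ∫_{−T}^{t} μ'(s) k((|x − ξ(t)|² + μ(t)²)^{1/2}, t − s) ds satisfies |Ψ₀(x, t)| ≤ 2C (sup |μ'|)(1 + |log(|x − ξ(t)|² + μ(t)²)|) for any ξ(t) ∈ ℝ⁴. -/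
noncomputable section
open Real Set

abbrev E4 : Type := EuclideanSpace ℝ (Fin 4)

/-- `k(ζ, t) = (1 - exp(-ζ²/(4t)))/ζ²`. -/
def kk (ζ t : ℝ) : ℝ := (1 - Real.exp (-ζ ^ 2 / (4 * t))) / ζ ^ 2

lemma kk_measurable (ζ : ℝ) : Measurable (kk ζ) := by
  unfold kk
  exact ((measurable_const.sub
    ((measurable_const.div (measurable_const.mul measurable_id)).exp)).div_const _)

lemma kk_nonneg {ζ u : ℝ} (hu : 0 ≤ u) : 0 ≤ kk ζ u := by
  unfold kk
  apply div_nonneg _ (sq_nonneg ζ)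
  have h : -ζ ^ 2 / (4 * u) ≤ 0 := by
    rcases eq_or_lt_of_le hu with h0 | h0
    · simp [← h0]
    · apply div_nonpos_of_nonpos_of_nonneg (by nlinarith [sq_nonneg ζ]) (by linarith)
  have := Real.exp_le_one_iff.mpr h
  linarith

lemma kk_le_inv {ζ : ℝ} (hζ : 0 < ζ) (u : ℝ) : kk ζ u ≤ (ζ ^ 2)⁻¹ := by
  unfold kk
  rw [← one_div]
  apply div_le_div_of_nonneg_right _ (by positivity)
  · have := Real.exp_nonneg (-ζ ^ 2 / (4 * u))
    linarith

lemma kk_le_div {ζ u : ℝ} (hζ : 0 < ζ) (hu : 0 < u) : kk ζ u ≤ 1 / 4 * (1 / u) := by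
  unfold kk
  have h1 : 1 - Real.exp (-ζ ^ 2 / (4 * u)) ≤ ζ ^ 2 / (4 * u) := by
    have := Real.add_one_le_exp (-(ζ ^ 2 / (4 * u)))
    have heq : -ζ ^ 2 / (4 * u) = -(ζ ^ 2 / (4 * u)) := by ring
    rw [heq]; linarith
  calc (1 - Real.exp (-ζ ^ 2 / (4 * u))) / ζ ^ 2 ≤ (ζ ^ 2 / (4 * u)) / ζ ^ 2 :=
        div_le_div_of_nonneg_right h1 (by positivity)
    _ = 1 / 4 * (1 / u) := by field_simp

lemma intervalIntegrable_of_bdd {f : ℝ → ℝ} {a b M : ℝ} (hf : Measurable f)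
    (hbd : ∀ x ∈ Set.uIoc a b, |f x| ≤ M) : IntervalIntegrable f MeasureTheory.volume a b := by
  rw [intervalIntegrable_iff]
  apply MeasureTheory.Measure.integrableOn_of_bounded (M := M)
  · exact (measure_Ioc_lt_top).ne
  · exact hf.aestronglyMeasurable
  · rw [MeasureTheory.ae_restrict_iff' measurableSet_uIoc]
    exact MeasureTheory.ae_of_all _ fun x hx => by
      rw [Real.norm_eq_abs]; exact hbd x hx

lemma key_integral_bound (a L : ℝ) (ha : 0 < a) (hL : 0 < L) (hL1 : L ≤ 1) :
    ∫ u in (0:ℝ)..L, kk (Real.sqrt a) u ≤ 1 + |Real.log a| := by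
  have hζ : 0 < Real.sqrt a := Real.sqrt_pos.mpr ha
  have hsq : Real.sqrt a ^ 2 = a := Real.sq_sqrt ha.le
  have habs : 0 ≤ |Real.log a| := abs_nonneg _
  have fInt : IntervalIntegrable (kk (Real.sqrt a)) MeasureTheory.volume 0 L := by
    apply intervalIntegrable_of_bdd (kk_measurable _) (M := a⁻¹)
    intro x hx
    rw [Set.uIoc_of_le hL.le] at hx
    rw [abs_of_nonneg (kk_nonneg hx.1.le)]
    have := kk_le_inv hζ x
    rwa [hsq] at this
  rcases le_or_gt L (a / 4) with h | h
  · -- whole integral bounded by L/a ≤ 1/4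
    have : ∫ u in (0:ℝ)..L, kk (Real.sqrt a) u ≤ ∫ _ in (0:ℝ)..L, a⁻¹ := by
      apply intervalIntegral.integral_mono_on hL.le fInt intervalIntegrable_const
      intro x _
      have := kk_le_inv hζ x
      rwa [hsq] at this
    rw [intervalIntegral.integral_const, smul_eq_mul] at this
    have hLa : (L - 0) * a⁻¹ ≤ 1 := by
      rw [sub_zero]
      have : L * a⁻¹ ≤ (a / 4) * a⁻¹ :=
        mul_le_mul_of_nonneg_right h (by positivity)
      have h4 : (a / 4) * a⁻¹ = 1 / 4 := by field_simp
      linarith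
    linarith
  · set m := a / 4 with hm_def
    have hm : 0 < m := by positivity
    have hmL : m ≤ L := h.le
    have h1Int : IntervalIntegrable (kk (Real.sqrt a)) MeasureTheory.volume 0 m :=
      fInt.mono_set (Set.uIcc_subset_uIcc (by simp [Set.mem_uIcc, hL.le])
        (by simp [Set.mem_uIcc]; left; exact ⟨hm.le, hmL⟩))
    have h2Int : IntervalIntegrable (kk (Real.sqrt a)) MeasureTheory.volume m L :=
      fInt.mono_set (Set.uIcc_subset_uIcc (by simp [Set.mem_uIcc]; left; exact ⟨hm.le, hmL⟩)
        (by simp [Set.mem_uIcc, hL.le]))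
    have hsplit : (∫ u in (0:ℝ)..L, kk (Real.sqrt a) u) =
        (∫ u in (0:ℝ)..m, kk (Real.sqrt a) u) + ∫ u in m..L, kk (Real.sqrt a) u :=
      (intervalIntegral.integral_add_adjacent_intervals h1Int h2Int).symm
    have hfirst : (∫ u in (0:ℝ)..m, kk (Real.sqrt a) u) ≤ 1 / 4 := by
      have h1 : (∫ u in (0:ℝ)..m, kk (Real.sqrt a) u) ≤ ∫ _ in (0:ℝ)..m, a⁻¹ := by
        apply intervalIntegral.integral_mono_on hm.le h1Int intervalIntegrable_const
        intro x _
        have := kk_le_inv hζ x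
        rwa [hsq] at this
      rw [intervalIntegral.integral_const, smul_eq_mul, sub_zero] at h1
      have : m * a⁻¹ = 1 / 4 := by rw [hm_def]; field_simp
      linarith
    have gInt : IntervalIntegrable (fun u => 1 / 4 * (1 / u)) MeasureTheory.volume m L := by
      apply ContinuousOn.intervalIntegrable
      apply continuousOn_const.mul
      apply continuousOn_const.div continuousOn_id
      intro x hx
      rw [Set.uIcc_of_le hmL] at hx
      exact ne_of_gt (lt_of_lt_of_le hm hx.1)
    have hsecond : (∫ u in m..L, kk (Real.sqrt a) u) ≤ ∫ u in m..L, 1 / 4 * (1 / u) := by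
      apply intervalIntegral.integral_mono_on hmL h2Int gInt
      intro x hx
      exact kk_le_div hζ (lt_of_lt_of_le hm hx.1)
    have hval : (∫ u in m..L, 1 / 4 * (1 / u)) = 1 / 4 * Real.log (L / m) := by
      rw [intervalIntegral.integral_const_mul, integral_one_div]
      rw [Set.uIcc_of_le hmL]
      intro hx
      exact absurd hx.1 (not_le.mpr hm)
    have hlog : Real.log (L / m) ≤ |Real.log a| + Real.log 4 := by
      rw [Real.log_div (ne_of_gt hL) (ne_of_gt hm), hm_def,
        Real.log_div (ne_of_gt ha) (by norm_num)]
      have hlogL : Real.log L ≤ 0 := Real.log_nonpos hL.le hL1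
      have : -Real.log a ≤ |Real.log a| := neg_le_abs _
      linarith
    have hlog4 : Real.log 4 ≤ 3 := by
      have := Real.log_lt_sub_one_of_pos (by norm_num : (0:ℝ) < 4) (by norm_num)
      linarith
    calc (∫ u in (0:ℝ)..L, kk (Real.sqrt a) u)
        = (∫ u in (0:ℝ)..m, kk (Real.sqrt a) u) + ∫ u in m..L, kk (Real.sqrt a) u := hsplit
      _ ≤ 1 / 4 + 1 / 4 * (|Real.log a| + Real.log 4) := by
          have := hsecond.trans (le_of_eq hval)
          have h4 : 1 / 4 * Real.log (L / m) ≤ 1 / 4 * (|Real.log a| + Real.log 4) := by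
            linarith
          linarith
      _ ≤ 1 + |Real.log a| := by nlinarith

/-- There is an absolute constant `C > 0` such that for every `T ∈ (0, 1/2]`, every `C¹`
function `μ : [-T, T] → (0, ∞)` with `|μ'| ≤ Mμ` on `[-T, T]`, every `ρ ≥ 0` and every
`t ∈ (0, T)`, setting `ζ = (ρ² + μ(t)²)^{1/2}`,
`|∫_{-T}^{t} μ'(s) k(ζ, t - s) ds| ≤ C Mμ (1 + |log(ρ² + μ(t)²)|)`.  In particular the
correction term `Ψ₀(x, t) = -2 ∫_{-T}^{t} μ'(s) k((|x - ξ(t)|² + μ(t)²)^{1/2}, t - s) ds`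
satisfies `|Ψ₀(x, t)| ≤ 2 C Mμ (1 + |log(|x - ξ(t)|² + μ(t)²)|)`. -/
theorem Psi₀_log_bound :
    ∃ C > (0 : ℝ), ∀ T ∈ Ioc (0 : ℝ) (1 / 2), ∀ μ μ' : ℝ → ℝ,
      (∀ t ∈ Icc (-T) T, 0 < μ t) →
      (∀ t ∈ Icc (-T) T, HasDerivAt μ (μ' t) t) →
      ContinuousOn μ' (Icc (-T) T) →
      ∀ Mμ : ℝ, (∀ s ∈ Icc (-T) T, |μ' s| ≤ Mμ) →
      (∀ ρ : ℝ, 0 ≤ ρ → ∀ t ∈ Ioo (0 : ℝ) T,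
        |∫ s in (-T)..t, μ' s * kk (Real.sqrt (ρ ^ 2 + (μ t) ^ 2)) (t - s)|
          ≤ C * Mμ * (1 + |Real.log (ρ ^ 2 + (μ t) ^ 2)|)) ∧
      (∀ ξ : ℝ → E4, ∀ x : E4, ∀ t ∈ Ioo (0 : ℝ) T,
        |(-2 : ℝ) * ∫ s in (-T)..t,
            μ' s * kk (Real.sqrt (‖x - ξ t‖ ^ 2 + (μ t) ^ 2)) (t - s)|
          ≤ 2 * C * Mμ * (1 + |Real.log (‖x - ξ t‖ ^ 2 + (μ t) ^ 2)|)) := by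
  refine ⟨1, one_pos, ?_⟩
  intro T hT μ μ' hμpos hderiv hcont Mμ hM
  obtain ⟨hT0, hThalf⟩ := hT
  have hM0 : 0 ≤ Mμ := le_trans (abs_nonneg _) (hM 0 ⟨by linarith, hT0.le⟩)
  have key : ∀ ρ : ℝ, 0 ≤ ρ → ∀ t ∈ Ioo (0 : ℝ) T,
      |∫ s in (-T)..t, μ' s * kk (Real.sqrt (ρ ^ 2 + (μ t) ^ 2)) (t - s)|
        ≤ 1 * Mμ * (1 + |Real.log (ρ ^ 2 + (μ t) ^ 2)|) := by
    intro ρ hρ t ht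
    obtain ⟨ht0, htT⟩ := ht
    have htmem : t ∈ Icc (-T) T := ⟨by linarith, htT.le⟩
    have hμt : 0 < μ t := hμpos t htmem
    set a := ρ ^ 2 + (μ t) ^ 2 with ha_def
    have ha : 0 < a := by positivity
    have hζ : 0 < Real.sqrt a := Real.sqrt_pos.mpr ha
    have hsq : Real.sqrt a ^ 2 = a := Real.sq_sqrt ha.le
    have hle : -T ≤ t := by linarith
    have hkkInt : IntervalIntegrable (fun s => kk (Real.sqrt a) (t - s))
        MeasureTheory.volume (-T) t := by
      apply intervalIntegrable_of_bdd ((kk_measurable _).comp (measurable_const.sub measurable_id))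
        (M := a⁻¹)
      intro x hx
      rw [Set.uIoc_of_le hle] at hx
      have hx0 : 0 ≤ t - x := by linarith [hx.2]
      simp only [Function.comp_apply, id_eq, Pi.sub_apply]
      rw [abs_of_nonneg (kk_nonneg hx0)]
      have := kk_le_inv hζ (t - x)
      rwa [hsq] at this
    have hμ'Int : IntervalIntegrable μ' MeasureTheory.volume (-T) t := by
      apply ContinuousOn.intervalIntegrable
      apply hcont.mono
      rw [Set.uIcc_of_le hle]
      exact Set.Icc_subset_Icc le_rfl htT.le
    have hprodInt : IntervalIntegrable (fun s => μ' s * kk (Real.sqrt a) (t - s))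
        MeasureTheory.volume (-T) t := by
      apply hkkInt.continuousOn_mul
      apply hcont.mono
      rw [Set.uIcc_of_le hle]
      exact Set.Icc_subset_Icc le_rfl htT.le
    calc |∫ s in (-T)..t, μ' s * kk (Real.sqrt a) (t - s)|
        ≤ ∫ s in (-T)..t, |μ' s * kk (Real.sqrt a) (t - s)| :=
          intervalIntegral.abs_integral_le_integral_abs hle
      _ ≤ ∫ s in (-T)..t, Mμ * kk (Real.sqrt a) (t - s) := by
          apply intervalIntegral.integral_mono_on hle hprodInt.abs (hkkInt.const_mul Mμ)
          intro s hs
          rw [abs_mul]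
          have hknn : 0 ≤ kk (Real.sqrt a) (t - s) := kk_nonneg (by linarith [hs.2])
          rw [abs_of_nonneg hknn]
          exact mul_le_mul_of_nonneg_right
            (hM s ⟨hs.1, le_trans hs.2 htT.le⟩) hknn
      _ = Mμ * ∫ s in (-T)..t, kk (Real.sqrt a) (t - s) :=
          intervalIntegral.integral_const_mul _ _
      _ = Mμ * ∫ u in (0:ℝ)..(t + T), kk (Real.sqrt a) u := by
          rw [intervalIntegral.integral_comp_sub_left (kk (Real.sqrt a)) t]
          norm_num
      _ ≤ Mμ * (1 + |Real.log a|) := by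
          apply mul_le_mul_of_nonneg_left _ hM0
          exact key_integral_bound a (t + T) ha (by linarith) (by linarith)
      _ = 1 * Mμ * (1 + |Real.log a|) := by ring
  refine ⟨key, ?_⟩
  intro ξ x t ht
  have h := key ‖x - ξ t‖ (norm_nonneg _) t ht
  rw [abs_mul]
  have : |(-2 : ℝ)| = 2 := by norm_num
  rw [this]
  nlinarith [abs_nonneg (∫ s in (-T)..t,
    μ' s * kk (Real.sqrt (‖x - ξ t‖ ^ 2 + (μ t) ^ 2)) (t - s))]
end
end
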